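/- For nonnegative reals λ1 ≥ λ2 ≥ λ3 with λ1 > λ2, the directional derivative of the entropy -∑ λi log λi along the constraint-preserving direction (keeping ∑ λi and ∑ λi² fixed) satisfies dS/dλ3 ≥ 0; equivalently, (λ3-λ2) log λ1 + (λ1-λ3) log λ2 + (λ2-λ1) log λ3 ≥ 0 whenever λ1 ≥ λ2 ≥ λ3 > 0. -/

import Mathlib

/-! The expression is the cleared-denominator form of the fact that the secant slopes of the
concave function `logb 2` decrease: the slope on `[λ2, λ1]` is at most the slope on `[λ3, λ2]`. -/

open Set

theorem ConcaveOn.sub_mul_add_sub_mul_le {𝕜 : Type*} [Field 𝕜] [LinearOrder 𝕜]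
    [IsStrictOrderedRing 𝕜] {s : Set 𝕜} {f : 𝕜 → 𝕜} (hf : ConcaveOn 𝕜 s f) {x y z : 𝕜}
    (hx : x ∈ s) (hz : z ∈ s) (hxy : x ≤ y) (hyz : y ≤ z) :
    (z - y) * f x + (y - x) * f z ≤ (z - x) * f y := by
  rcases hxy.eq_or_lt with rfl | hxy
  · exact le_of_eq (by ring)
  rcases hyz.eq_or_lt with rfl | hyz
  · exact le_of_eq (by ring)
  have h := hf.neg.secant_mono_aux1 hx hz hxy hyz
  simp only [Pi.neg_apply] at h
  linarith

theorem Real.concaveOn_logb_Ioi {b : ℝ} (hb : 1 ≤ b) : ConcaveOn ℝ (Ioi 0) (Real.logb b) := by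
  have h : Real.logb b = fun x ↦ (Real.log b)⁻¹ • Real.log x := by
    ext x
    rw [smul_eq_mul, inv_mul_eq_div, Real.logb]
  rw [h]
  exact strictConcaveOn_log_Ioi.concaveOn.smul (inv_nonneg.2 (Real.log_nonneg hb))

theorem stmt4 (l1 l2 l3 : ℝ) (h3 : 0 < l3) (h32 : l3 ≤ l2) (h21 : l2 ≤ l1) :
    0 ≤ (l3 - l2) * Real.logb 2 l1 + (l1 - l3) * Real.logb 2 l2
        + (l2 - l1) * Real.logb 2 l3 := by
  have h1 : 0 < l1 := h3.trans_le (h32.trans h21)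
  have hchord := (Real.concaveOn_logb_Ioi one_le_two).sub_mul_add_sub_mul_le h3 h1 h32 h21
  linarith
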